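/- For any Eulerian digraph D, any vertex r, and any k, the number of k-spanning trees of D rooted at r equals the number of k-spanning trees of the transpose D^T rooted at r. -/

import Mathlib

open Classical

/-- A finite multidigraph: finite vertex and edge types with initial and final
vertex maps. -/
structure Multidigraph where
  V : Type
  E : Type
  [fintV : Fintype V]
  [fintE : Fintype E]
  first : E → V
  last : E → V

attribute [instance] Multidigraph.fintV Multidigraph.fintE

namespace Multidigraph

variable (D : Multidigraph)

/-- The out-degree of a vertex. -/
noncomputable def outdeg (v : D.V) : ℕ := Nat.card {e : D.E // D.first e = v}

/-- The in-degree of a vertex. -/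
noncomputable def indeg (v : D.V) : ℕ := Nat.card {e : D.E // D.last e = v}

/-- Undirected adjacency using only edges in `T`. -/
def Adj (T : Set D.E) (a b : D.V) : Prop :=
  ∃ e ∈ T, (D.first e = a ∧ D.last e = b) ∨ (D.first e = b ∧ D.last e = a)

/-- Undirected reachability using only edges in `T`. -/
def Reach (T : Set D.E) : D.V → D.V → Prop := Relation.ReflTransGen (D.Adj T)

/-- The underlying undirected graph is connected. -/
def Connected : Prop := ∀ a b : D.V, D.Reach Set.univ a b

/-- An Eulerian digraph: connected and with in-degree equal to out-degree at
every vertex. -/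
def Eulerian : Prop := D.Connected ∧ ∀ v : D.V, D.indeg v = D.outdeg v

/-- `T` is a spanning tree of the underlying undirected graph: it connects all
vertices and has `|V| - 1` edges. -/
def IsSpanningTree (T : Set D.E) : Prop :=
  (∀ a b : D.V, D.Reach T a b) ∧ Nat.card T = Nat.card D.V - 1

/-- The out-degree of `v` in the subgraph `T` after reversing the orientations
of the edges in `S`. -/
noncomputable def outdegRev (T S : Set D.E) (v : D.V) : ℕ :=
  Nat.card {e : D.E // (e ∈ T \ S ∧ D.first e = v) ∨ (e ∈ S ∧ D.last e = v)}

/-- `T` becomes an oriented spanning tree rooted at `r` (every vertex has a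
unique directed path to `r`, i.e. every non-root vertex has out-degree `1` and
the root has out-degree `0` in the tree) after reversing exactly the edges of
`S ⊆ T`. -/
def IsOrientedSpanningTreeRev (T S : Set D.E) (r : D.V) : Prop :=
  D.IsSpanningTree T ∧ S ⊆ T ∧ (∀ v : D.V, v ≠ r → D.outdegRev T S v = 1) ∧
    D.outdegRev T S r = 0

/-- `T` is an oriented spanning tree rooted at `r`: every vertex has a unique
directed path to `r`. -/
def IsOrientedSpanningTree (T : Set D.E) (r : D.V) : Prop :=
  D.IsOrientedSpanningTreeRev T ∅ r

/-- `T` is a `k`-spanning tree rooted at `r`: reversing the orientation of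
exactly `k` of its edges yields an oriented spanning tree rooted at `r`. -/
def IsKSpanningTree (T : Set D.E) (r : D.V) (k : ℕ) : Prop :=
  ∃ S : Set D.E, Nat.card S = k ∧ D.IsOrientedSpanningTreeRev T S r

/-- `c D k r` is the number of `k`-spanning trees of `D` rooted at `r`. -/
noncomputable def c (k : ℕ) (r : D.V) : ℕ :=
  Nat.card {T : Set D.E // D.IsKSpanningTree T r k}

/-- The transpose digraph: every edge reversed. -/
def transpose : Multidigraph := { D with first := D.last, last := D.first }

end Multidigraph

/-!
Weight an edge traversed forwards by `1` and backwards by `X`, and let `L` be the reduced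
weighted Laplacian of `D` at `r` (rows indexed by tails). Expanding `det L` row by row gives a
sum over the maps `p` choosing an outgoing arc at every vertex `v ≠ r`; the term of `p` is
`X ^ (number of reversed arcs) * det (1 - P)`, where `P` is the adjacency matrix of the map
"follow `p`", and `det (1 - P)` is `1` when following `p` always ends at `r` and `0` otherwise.
The maps of the first kind correspond bijectively to the `k`-spanning trees (together with their
reversed edges), so the coefficient of `X ^ k` in `det L` is `c D k r`.

The Laplacian of `Dᵀ` is the transpose of that of `D` as soon as every vertex has equal weighted
out- and in-degree, `outdeg v + X * indeg v = indeg v + X * outdeg v`, which is exactly the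
balance condition of an Eulerian digraph; and a determinant is invariant under transposition.
-/

open Finset Matrix

section FunctionalGraph

variable {α : Type*} {g : α → α} {r : α}

def IsRootedAt (g : α → α) (r : α) : Prop := ∀ v, ∃ n, g^[n] v = r

theorem IsRootedAt.eq_empty_of_mapsTo (h : IsRootedAt g r) {s : Set α} (hs : Set.MapsTo g s s)
    (hr : r ∉ s) : s = ∅ := by
  refine Set.eq_empty_of_forall_notMem fun v hv => ?_
  obtain ⟨n, hn⟩ := h v
  exact hr (hn ▸ hs.iterate n hv)

theorem IsRootedAt.eq_or_apply_eq_of_apply_apply (h : IsRootedAt g r) {v : α} (hv : g (g v) = v) :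
    v = r ∨ g v = r := by
  by_contra! hne
  have hmaps : Set.MapsTo g {v, g v} {v, g v} := by
    rintro x (rfl | rfl) <;> simp [hv]
  exact (Set.insert_nonempty _ _).ne_empty
    (h.eq_empty_of_mapsTo hmaps (by simp [hne.1.symm, hne.2.symm]))

theorem IsRootedAt.eq_of_apply_eq_self (h : IsRootedAt g r) {v : α} (hv : g v = v) : v = r :=
  (h.eq_or_apply_eq_of_apply_apply (by rw [hv, hv])).elim id hv.symm.trans

theorem exists_iterate_apply_eq_iff {v : α} (hv : v ≠ r) :
    (∃ n, g^[n] (g v) = r) ↔ ∃ n, g^[n] v = r := by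
  refine ⟨fun ⟨n, hn⟩ => ⟨n + 1, hn⟩, fun ⟨n, hn⟩ => ?_⟩
  cases n with
  | zero => exact absurd hn hv
  | succ n => exact ⟨n, hn⟩

end FunctionalGraph

section FunAdjMatrix

variable {V : Type*} [Fintype V] [DecidableEq V] (R : Type*) [CommRing R] {g : V → V} {r : V}

def funAdjMatrix (g : V → V) (r : V) : Matrix {v // v ≠ r} {v // v ≠ r} R :=
  Matrix.of fun u v => if g u = v then 1 else 0

variable {R}

theorem funAdjMatrix_mulVec (x : {v // v ≠ r} → R) (u : {v // v ≠ r}) :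
    (funAdjMatrix R g r *ᵥ x) u = if h : g u = r then 0 else x ⟨g u, h⟩ := by
  split_ifs with h
  · refine Finset.sum_eq_zero fun v _ => ?_
    simp [funAdjMatrix, h, Ne.symm v.2]
  · rw [mulVec, dotProduct, Finset.sum_eq_single ⟨g u, h⟩]
    · simp [funAdjMatrix]
    · intro v _ hv
      simp only [funAdjMatrix, of_apply, ite_mul, one_mul, zero_mul, ite_eq_right_iff]
      exact fun hgv => absurd (Subtype.ext hgv.symm) hv
    · simp

theorem det_one_sub_funAdjMatrix_of_isRootedAt (h : IsRootedAt g r) :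
    (1 - funAdjMatrix R g r).det = 1 := by
  rw [det_apply', Finset.sum_eq_single 1]
  · have hfix : ∀ u : {v // v ≠ r}, g u ≠ u := fun u hu => u.2 (h.eq_of_apply_eq_self hu)
    simp [one_apply, funAdjMatrix, hfix]
  · intro σ _ hσ
    suffices ∃ i, (1 - funAdjMatrix R g r) (σ i) i = 0 by
      obtain ⟨i, hi⟩ := this
      exact mul_eq_zero_of_right _ (Finset.prod_eq_zero (mem_univ i) hi)
    by_contra! hne
    have hback : ∀ i, σ i ≠ i → g (σ i) = i := fun i hi => by
      by_contra hgi
      exact hne i (by simp [one_apply, funAdjMatrix, hi, hgi])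
    -- the points moved by `σ` form a `g`-invariant set avoiding `r`
    have hmaps : Set.MapsTo g (Subtype.val '' {i | σ i ≠ i}) (Subtype.val '' {i | σ i ≠ i}) := by
      rintro _ ⟨j, hj, rfl⟩
      have hσi : σ (σ.symm j) = j := σ.apply_symm_apply j
      have hi : σ (σ.symm j) ≠ σ.symm j := fun hii => hj (by rw [← hσi, hii, hii])
      exact ⟨σ.symm j, hi, by rw [← hback _ hi, hσi]⟩
    have hX := h.eq_empty_of_mapsTo hmaps fun ⟨i, _, hi⟩ => i.2 hi
    rw [Set.image_eq_empty, Set.eq_empty_iff_forall_notMem] at hX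
    exact hσ (Equiv.ext fun i => not_not.mp (hX i))
  · simp

theorem det_one_sub_funAdjMatrix_of_not_isRootedAt (h : ¬ IsRootedAt g r) :
    (1 - funAdjMatrix R g r).det = 0 := by
  obtain ⟨v₀, hv₀⟩ : ∃ v, ∀ n, g^[n] v ≠ r := by simpa [IsRootedAt] using h
  -- the indicator of the points that never reach `r` is in the kernel
  let x : {v // v ≠ r} → R := fun u => if ∃ n, g^[n] u = r then 0 else 1
  refine det_eq_zero_of_mulVec_eq_zero_of_mem_nonZeroDivisors (v := x) (i := ⟨v₀, hv₀ 0⟩) ?_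
    (by simp [x, hv₀])
  ext u
  rw [sub_mulVec, one_mulVec, Pi.sub_apply, funAdjMatrix_mulVec, Pi.zero_apply, sub_eq_zero]
  split_ifs with hgu
  · simp only [x, ite_eq_left_iff]
    exact fun hn => absurd ⟨1, hgu⟩ hn
  · simp only [x, exists_iterate_apply_eq_iff u.2]

theorem det_one_sub_funAdjMatrix :
    (1 - funAdjMatrix R g r).det = if IsRootedAt g r then 1 else 0 := by
  split_ifs with h
  exacts [det_one_sub_funAdjMatrix_of_isRootedAt h, det_one_sub_funAdjMatrix_of_not_isRootedAt h]

end FunAdjMatrix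

section Laplacian

variable {V A R : Type*} [DecidableEq V]

def nextVertex (hd : A → V) (r : V) (p : {v // v ≠ r} → A) (v : V) : V :=
  if h : v = r then r else hd (p ⟨v, h⟩)

theorem nextVertex_coe {hd : A → V} {r : V} {p : {v // v ≠ r} → A} (u : {v // v ≠ r}) :
    nextVertex hd r p u = hd (p u) :=
  dif_neg u.2

variable [Fintype A] [CommRing R]

def laplacian (tl hd : A → V) (w : A → R) : Matrix V V R :=
  Matrix.of fun u v =>
    ∑ a with tl a = u, w a * ((if u = v then 1 else 0) - (if hd a = v then 1 else 0))

theorem laplacian_apply (tl hd : A → V) (w : A → R) (u v : V) :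
    laplacian tl hd w u v =
      (if u = v then ∑ a with tl a = u, w a else 0) - ∑ a with tl a = u ∧ hd a = v, w a := by
  simp only [laplacian, of_apply, mul_sub, mul_ite, mul_one, mul_zero, sum_sub_distrib,
    ← sum_filter, filter_filter]
  split_ifs with huv <;> simp [huv]

theorem laplacian_transpose {tl hd : A → V} {w : A → R}
    (h : ∀ u, ∑ a with tl a = u, w a = ∑ a with hd a = u, w a) :
    (laplacian tl hd w)ᵀ = laplacian hd tl w := by
  ext u v
  rw [transpose_apply, laplacian_apply, laplacian_apply]
  congr 1
  · by_cases huv : u = v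
    · subst huv
      simp [h]
    · simp [huv, Ne.symm huv]
  · exact sum_congr (by ext; simp [and_comm]) fun _ _ => rfl

variable [Fintype V]

theorem det_laplacian_submatrix (tl hd : A → V) (w : A → R) (r : V) :
    ((laplacian tl hd w).submatrix ((↑) : {v // v ≠ r} → V) (↑)).det =
      ∑ p ∈ Fintype.piFinset (fun u : {v // v ≠ r} => ({a | tl a = u} : Finset A))
        with IsRootedAt (nextVertex hd r p) r, ∏ u, w (p u) := by
  have hrows : (laplacian tl hd w).submatrix ((↑) : {v // v ≠ r} → V) (↑) =
      fun u : {v // v ≠ r} => ∑ a ∈ ({a | tl a = (u : V)} : Finset A),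
        fun v : {v // v ≠ r} =>
          w a * ((if u = v then 1 else 0) - (if hd a = v then 1 else 0)) := by
    ext u v
    simp [laplacian, Finset.sum_apply, Subtype.ext_iff]
  have hterm : ∀ p : {v // v ≠ r} → A,
      (of fun u v : {v // v ≠ r} =>
        w (p u) * ((if u = v then 1 else 0) - (if hd (p u) = v then 1 else 0))).det =
      (∏ u, w (p u)) * (1 - funAdjMatrix R (nextVertex hd r p) r).det := by
    intro p
    rw [← det_mul_column]
    congr 1
    ext u v
    simp [funAdjMatrix, one_apply, nextVertex_coe]
  rw [hrows]
  refine (detRowAlternating.toMultilinearMap.map_sum_finset _ _).trans ?_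
  rw [sum_filter]
  refine sum_congr rfl fun p _ => (hterm p).trans ?_
  rw [det_one_sub_funAdjMatrix]
  split_ifs <;> simp

end Laplacian

namespace Multidigraph

variable {D : Multidigraph}

theorem Reach.symm {T : Set D.E} {a b : D.V} (h : D.Reach T a b) : D.Reach T b a :=
  haveI : Std.Symm (D.Adj T) := ⟨fun _ _ ⟨e, he, hor⟩ => ⟨e, he, hor.symm⟩⟩
  symm_of (Relation.ReflTransGen (D.Adj T)) h

-- An arc is an edge with an orientation flag, `true` meaning that the edge is reversed.
def tl (D : Multidigraph) (a : D.E × Bool) : D.V := if a.2 then D.last a.1 else D.first a.1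

def hd (D : Multidigraph) (a : D.E × Bool) : D.V := if a.2 then D.first a.1 else D.last a.1

theorem first_last_iff_tl_hd (a : D.E × Bool) {x y : D.V} :
    (D.first a.1 = x ∧ D.last a.1 = y) ∨ (D.first a.1 = y ∧ D.last a.1 = x) ↔
      (D.tl a = x ∧ D.hd a = y) ∨ (D.tl a = y ∧ D.hd a = x) := by
  obtain ⟨e, _ | _⟩ := a <;> simp only [tl, hd, Bool.false_eq_true, if_false, if_true]; tauto

theorem eq_or_tl_eq_hd_of_fst_eq {a b : D.E × Bool} (h : a.1 = b.1) :
    a = b ∨ (D.tl a = D.hd b ∧ D.hd a = D.tl b) := by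
  obtain ⟨e, _ | _⟩ := a <;> obtain ⟨e', _ | _⟩ := b <;> cases h <;> simp [tl, hd]

theorem adj_tl_hd {T : Set D.E} {a : D.E × Bool} (ha : a.1 ∈ T) : D.Adj T (D.tl a) (D.hd a) :=
  ⟨a.1, ha, (first_last_iff_tl_hd a).mpr (Or.inl ⟨rfl, rfl⟩)⟩

noncomputable def orient (S : Set D.E) (e : D.E) : D.E × Bool := (e, decide (e ∈ S))

theorem outdegRev_eq_card {T S : Set D.E} (hST : S ⊆ T) (v : D.V) :
    D.outdegRev T S v = Nat.card {e // e ∈ T ∧ D.tl (orient S e) = v} := by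
  refine Nat.card_congr (Equiv.subtypeEquivRight fun e => ?_)
  by_cases he : e ∈ S
  · simp [orient, tl, he, hST he]
  · simp [orient, tl, he]

variable {r : D.V}

structure IsArborescence (p : {v // v ≠ r} → D.E × Bool) : Prop where
  tl_eq : ∀ u, D.tl (p u) = u
  isRootedAt : IsRootedAt (nextVertex D.hd r p) r

theorem isArborescence_iff {p : {v // v ≠ r} → D.E × Bool} :
    IsArborescence p ↔ (∀ u, D.tl (p u) = u) ∧ IsRootedAt (nextVertex D.hd r p) r :=
  ⟨fun h => ⟨h.1, h.2⟩, fun h => ⟨h.1, h.2⟩⟩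

def edgeSet (p : {v // v ≠ r} → D.E × Bool) : Set D.E := Set.range fun u => (p u).1

def revSet (p : {v // v ≠ r} → D.E × Bool) : Set D.E := (fun u => (p u).1) '' {u | (p u).2}

noncomputable def numReversed (p : {v // v ≠ r} → D.E × Bool) : ℕ := #{u | (p u).2}

variable {p : {v // v ≠ r} → D.E × Bool}

theorem IsArborescence.injective_fst (hp : IsArborescence p) :
    Function.Injective fun u => (p u).1 := by
  intro u v h
  rcases eq_or_tl_eq_hd_of_fst_eq h with h | ⟨htl, hhd⟩
  · exact Subtype.ext (by rw [← hp.tl_eq u, ← hp.tl_eq v, h])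
  · -- `u` and `v` would form a 2-cycle of `nextVertex`
    have huv : nextVertex D.hd r p u = v := by rw [nextVertex_coe, hhd, hp.tl_eq v]
    have hvu : nextVertex D.hd r p v = u := by rw [nextVertex_coe, ← htl, hp.tl_eq u]
    rcases hp.isRootedAt.eq_or_apply_eq_of_apply_apply (v := u) (by rw [huv, hvu]) with h | h
    exacts [absurd h u.2, absurd (huv.symm.trans h) v.2]

theorem card_edgeSet_of_injective (hp : Function.Injective fun u => (p u).1) :
    Nat.card (edgeSet p) = Nat.card D.V - 1 := by
  rw [edgeSet, Nat.card_range_of_injective hp,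
    Nat.card_eq_fintype_card, Fintype.card_subtype_compl, Fintype.card_subtype_eq,
    Nat.card_eq_fintype_card]

theorem IsArborescence.card_revSet (hp : IsArborescence p) :
    Nat.card (revSet p) = numReversed p := by
  rw [revSet, Nat.card_image_of_injective (hp.injective_fst),
    Nat.card_eq_fintype_card, numReversed, Fintype.card_ofFinset]
  rfl

theorem IsArborescence.orient_revSet_fst (hp : IsArborescence p) (u : {v // v ≠ r}) :
    orient (revSet p) (p u).1 = p u := by
  have hmem : (p u).1 ∈ revSet p ↔ (p u).2 :=
    ⟨fun ⟨u', hu', h⟩ => hp.injective_fst h ▸ hu', fun h => ⟨u, h, rfl⟩⟩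
  exact Prod.ext rfl (by simp [orient, hmem])

theorem IsArborescence.mem_edgeSet_and_tl_eq_iff (hp : IsArborescence p) {e : D.E} {v : D.V} :
    e ∈ edgeSet p ∧ D.tl (orient (revSet p) e) = v ↔
      ∃ u : {v // v ≠ r}, (p u).1 = e ∧ ↑u = v := by
  constructor
  · rintro ⟨⟨u, rfl⟩, h⟩
    exact ⟨u, rfl, by rwa [hp.orient_revSet_fst, hp.tl_eq] at h⟩
  · rintro ⟨u, rfl, rfl⟩
    exact ⟨⟨u, rfl⟩, by rw [hp.orient_revSet_fst, hp.tl_eq]⟩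

theorem IsArborescence.reach_root (hp : IsArborescence p) (v : D.V) :
    D.Reach (edgeSet p) v r := by
  obtain ⟨n, hn⟩ := hp.isRootedAt v
  induction n generalizing v with
  | zero =>
    rw [show v = r from hn]
    exact .refl
  | succ n ih =>
    by_cases hv : v = r
    · rw [hv]
      exact .refl
    · have hadj := adj_tl_hd (T := edgeSet p) ⟨⟨v, hv⟩, rfl⟩
      rw [hp.tl_eq, ← nextVertex_coe (hd := D.hd) ⟨v, hv⟩] at hadj
      exact .head hadj (ih _ hn)

theorem IsArborescence.isOrientedSpanningTreeRev (hp : IsArborescence p) :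
    D.IsOrientedSpanningTreeRev (edgeSet p) (revSet p) r := by
  have hST : revSet p ⊆ edgeSet p := Set.image_subset_range _ _
  refine ⟨⟨fun a b => (hp.reach_root a).trans (hp.reach_root b).symm,
    card_edgeSet_of_injective (hp.injective_fst)⟩,
    hST, fun v hv => ?_, ?_⟩ <;>
    simp only [outdegRev_eq_card hST, hp.mem_edgeSet_and_tl_eq_iff]
  · rw [Nat.card_eq_one_iff_exists]
    refine ⟨⟨_, ⟨v, hv⟩, rfl, rfl⟩, fun ⟨e, u, hue, huv⟩ => ?_⟩
    obtain rfl : u = ⟨v, hv⟩ := Subtype.ext huv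
    exact Subtype.ext hue.symm
  · exact Nat.card_eq_zero.mpr (.inl ⟨fun ⟨_, u, _, hu⟩ => u.2 hu⟩)

theorem IsArborescence.eq_of_edgeSet_eq {p' : {v // v ≠ r} → D.E × Bool}
    (hp : IsArborescence p) (hp' : IsArborescence p') (h : edgeSet p = edgeSet p') : p = p' := by
  -- the vertices where `p` and `p'` differ are closed under `nextVertex D.hd r p`
  have hmaps : Set.MapsTo (nextVertex D.hd r p) (Subtype.val '' {u | p' u ≠ p u})
      (Subtype.val '' {u | p' u ≠ p u}) := by
    rintro _ ⟨u, hne, rfl⟩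
    obtain ⟨u', hu'⟩ : (p u).1 ∈ edgeSet p' := h ▸ ⟨u, rfl⟩
    rcases eq_or_tl_eq_hd_of_fst_eq hu' with heq | ⟨htl, -⟩
    · obtain rfl : u' = u := Subtype.ext (by rw [← hp'.tl_eq u', heq, hp.tl_eq])
      exact absurd heq hne
    · have hnext : nextVertex D.hd r p u = u' :=
        (nextVertex_coe u).trans (htl.symm.trans (hp'.tl_eq u'))
      refine ⟨u', fun heq => ?_, hnext.symm⟩
      have hu'u : u' = u := hp.injective_fst (by simp only [← heq, hu'])
      exact u.2 (hp.isRootedAt.eq_of_apply_eq_self (hnext.trans (congrArg Subtype.val hu'u)))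
  have hempty := hp.isRootedAt.eq_empty_of_mapsTo hmaps fun ⟨u, _, hu⟩ => u.2 hu
  rw [Set.image_eq_empty, Set.eq_empty_iff_forall_notMem] at hempty
  exact funext fun u => not_not.mp (hempty u) |>.symm

theorem isRootedAt_nextVertex_of_reach (htl : ∀ u, D.tl (p u) = u)
    (hreach : ∀ v, D.Reach (edgeSet p) r v) :
    IsRootedAt (nextVertex D.hd r p) r := by
  set P : D.V → Prop := fun v => ∃ n, (nextVertex D.hd r p)^[n] v = r
  -- the edge `(p u).1` joins `u` to `nextVertex u`, and `P u ↔ P (nextVertex u)`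
  have hadj : ∀ a b, D.Adj (edgeSet p) a b → (P a ↔ P b) := by
    rintro a b ⟨_, ⟨u, rfl⟩, hab⟩
    have hu : P (nextVertex D.hd r p u) ↔ P u := exists_iterate_apply_eq_iff u.2
    rw [first_last_iff_tl_hd, htl, ← nextVertex_coe (hd := D.hd) u] at hab
    rcases hab with ⟨rfl, rfl⟩ | ⟨rfl, rfl⟩
    exacts [hu.symm, hu]
  intro v
  have hPv : P r ↔ P v := by
    induction hreach v with
    | refl => rfl
    | tail _ hbc ih => exact ih.trans (hadj _ _ hbc)
  exact hPv.mp ⟨0, rfl⟩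

theorem IsOrientedSpanningTreeRev.exists_isArborescence {T S : Set D.E}
    (h : D.IsOrientedSpanningTreeRev T S r) :
    ∃ p : {v // v ≠ r} → D.E × Bool,
      IsArborescence p ∧ edgeSet p = T ∧ revSet p = S := by
  obtain ⟨⟨hreach, hcard⟩, hST, hdeg, -⟩ := h
  have hex : ∀ u : {v // v ≠ r}, ∃ e, e ∈ T ∧ D.tl (orient S e) = u := fun u => by
    have h1 := hdeg u u.2
    rw [outdegRev_eq_card hST, Nat.card_eq_one_iff_exists] at h1
    obtain ⟨⟨e, he⟩, -⟩ := h1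
    exact ⟨e, he⟩
  choose g hgT hgtl using hex
  set p : {v // v ≠ r} → D.E × Bool := fun u => orient S (g u)
  have hinj : Function.Injective fun u => (p u).1 := fun u v huv => by
    rw [← Subtype.coe_inj, ← hgtl u, ← hgtl v]
    simp only [p, orient] at huv
    rw [huv]
  have hT : edgeSet p = T := by
    refine Set.eq_of_subset_of_ncard_le (Set.range_subset_iff.mpr hgT) ?_
    rw [← Nat.card_coe_set_eq, ← Nat.card_coe_set_eq, hcard, card_edgeSet_of_injective hinj]
  have hS : revSet p = S := by
    ext e
    constructor
    · rintro ⟨u, hu, rfl⟩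
      simpa [p, orient] using hu
    · intro he
      obtain ⟨u, rfl⟩ : e ∈ edgeSet p := hT ▸ hST he
      exact ⟨u, by simpa [p, orient] using he, rfl⟩
  exact ⟨p, ⟨hgtl, isRootedAt_nextVertex_of_reach hgtl fun v => hT ▸ hreach r v⟩, hT, hS⟩

theorem c_eq_card_isArborescence (k : ℕ) (r : D.V) :
    D.c k r =
      Nat.card {p : {v // v ≠ r} → D.E × Bool // IsArborescence p ∧ numReversed p = k} := by
  symm
  refine Nat.card_eq_of_bijective (fun p =>
    ⟨edgeSet p.1, revSet p.1, p.2.1.card_revSet.trans p.2.2, p.2.1.isOrientedSpanningTreeRev⟩)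
    ⟨?_, ?_⟩
  · rintro ⟨p, hp, _⟩ ⟨p', hp', _⟩ h
    exact Subtype.ext (hp.eq_of_edgeSet_eq hp' (congrArg Subtype.val h))
  · rintro ⟨T, S, hk, hT⟩
    obtain ⟨p, hp, rfl, rfl⟩ := hT.exists_isArborescence
    exact ⟨⟨p, hp, hp.card_revSet.symm.trans hk⟩, rfl⟩

open Polynomial

noncomputable def arcWeight (a : D.E × Bool) : ℤ[X] := if a.2 then X else 1

theorem prod_arcWeight {r : D.V} (p : {v // v ≠ r} → D.E × Bool) :
    ∏ u, arcWeight (p u) = X ^ numReversed p := by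
  simp [arcWeight, prod_ite, numReversed]

theorem coeff_det_laplacian_submatrix (k : ℕ) (r : D.V) :
    ((laplacian D.tl D.hd arcWeight).submatrix ((↑) : {v // v ≠ r} → D.V) (↑)).det.coeff k =
      D.c k r := by
  rw [det_laplacian_submatrix, finsetSum_coeff, c_eq_card_isArborescence]
  simp_rw [prod_arcWeight, coeff_X_pow]
  rw [sum_boole, Nat.card_eq_fintype_card, Fintype.card_subtype, filter_filter]
  congr 2
  ext p
  simp [Fintype.mem_piFinset, isArborescence_iff, eq_comm, and_assoc]

theorem sum_arcWeight_tl (u : D.V) :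
    ∑ a with D.tl a = u, arcWeight a = (D.outdeg u : ℤ[X]) + (D.indeg u : ℤ[X]) * X := by
  rw [sum_filter, Fintype.sum_prod_type]
  simp [tl, arcWeight, sum_add_distrib, outdeg, indeg, Nat.card_eq_fintype_card,
    Fintype.card_subtype]
  rw [← sum_filter, sum_const, nsmul_eq_mul, add_comm]

theorem sum_arcWeight_hd (u : D.V) :
    ∑ a with D.hd a = u, arcWeight a = (D.indeg u : ℤ[X]) + (D.outdeg u : ℤ[X]) * X :=
  -- `Dᵀ.tl = D.hd` and `Dᵀ.outdeg = D.indeg` hold definitionally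
  D.transpose.sum_arcWeight_tl u

theorem laplacian_transpose_of_indeg_eq_outdeg (h : ∀ v, D.indeg v = D.outdeg v) :
    (laplacian D.tl D.hd arcWeight)ᵀ = laplacian D.hd D.tl arcWeight :=
  laplacian_transpose fun u => by rw [sum_arcWeight_tl, sum_arcWeight_hd, h]

end Multidigraph

/-- For any Eulerian digraph `D`, any vertex `r`, and any `k`, the
number of `k`-spanning trees of `D` rooted at `r` equals the number of
`k`-spanning trees of the transpose `Dᵀ` rooted at `r`. -/
theorem stmt4 (D : Multidigraph) (hD : D.Eulerian) (r : D.V) (k : ℕ) :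
    D.c k r = D.transpose.c k r := by
  have hD' : ((laplacian D.hd D.tl Multidigraph.arcWeight).submatrix
      (Subtype.val : {v // v ≠ r} → D.V) Subtype.val).det.coeff k = D.transpose.c k r :=
    Multidigraph.coeff_det_laplacian_submatrix (D := D.transpose) k r
  rw [← Multidigraph.laplacian_transpose_of_indeg_eq_outdeg hD.2, ← transpose_submatrix,
    det_transpose, Multidigraph.coeff_det_laplacian_submatrix] at hD'
  exact_mod_cast hD'
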